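/- Let a > 0 be a real number, let k ≥ 1 be an integer and let c > 4^{k−1} be a real number. Let P' be a finite point of E'_a(ℝ) with x(P') ≥ c·√a, and suppose 2^kP' is a finite point. Then log z(2^kP') > −128·4^{2(k−1)}/c². -/

import Mathlib

open Filter Real

/-- The translated elliptic curve `E'_a : y² = x³ − 3√a·x² + 4a·x − 2a^{3/2}` over `ℝ`,
obtained from `E_a : y² = x³ + a·x` via `x ↦ x + √a`. -/
noncomputable def E'curve (a : ℝ) : WeierstrassCurve.Affine ℝ :=
  { a₁ := 0, a₂ := -3 * Real.sqrt a, a₃ := 0, a₄ := 4 * a, a₆ := -2 * a ^ ((3 : ℝ) / 2) }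

/-- The x-coordinate of a point (with junk value `0` at the identity `O`). -/
def xc {F : Type*} [Field F] {W : WeierstrassCurve.Affine F} : W.Point → F
  | .zero => 0
  | @WeierstrassCurve.Affine.Point.some _ _ _ x _ _ => x

/-- For a finite point `Q` of `E'_a` with `x(Q) = x`, the quantity
`z(Q) = 1 − 8a·x⁻² + 16·a^{3/2}·x⁻³ − 8a²·x⁻⁴` from Tate's series. -/
noncomputable def zE' (a x : ℝ) : ℝ :=
  1 - 8 * a / x ^ 2 + 16 * a ^ ((3 : ℝ) / 2) / x ^ 3 - 8 * a ^ 2 / x ^ 4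

/-!
Doubling can shrink the `x`-coordinate on `E'_a` by at most a factor `4`, so
`x(2^kP') ≥ c√a / 4^k`. Writing `t = √a / x`, one has `z = 1 − 8t²(1 − t)²` with `0 < t ≤ 1`,
and then `log z ≥ 1 − 1/z > −8t² ≥ −8·16^k / c²`.
-/

open WeierstrassCurve.Affine

lemma Real.rpow_three_halves {a : ℝ} (ha : 0 ≤ a) : a ^ ((3 : ℝ) / 2) = √a ^ 3 := by
  rw [Real.sqrt_eq_rpow, ← Real.rpow_natCast, ← Real.rpow_mul ha]
  norm_num

namespace E'curve

variable {a : ℝ}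

lemma equation_iff (ha : 0 ≤ a) {x y : ℝ} :
    (E'curve a).Equation x y ↔ y ^ 2 = (x - √a) * ((x - √a) ^ 2 + √a ^ 2) := by
  simp only [WeierstrassCurve.Affine.equation_iff, E'curve, Real.rpow_three_halves ha]
  constructor <;> intro h
  · linear_combination h - 4 * x * Real.sq_sqrt ha
  · linear_combination h + 4 * x * Real.sq_sqrt ha

lemma sqrt_le_of_equation (ha : 0 ≤ a) {x y : ℝ} (h : (E'curve a).Equation x y) : √a ≤ x := by
  rw [equation_iff ha] at h
  by_contra! hlt
  nlinarith [sq_nonneg y, sq_nonneg (x - √a), mul_pos (sub_pos.2 hlt) (sub_pos.2 hlt)]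

lemma sqrt_le_xc (ha : 0 ≤ a) {P : (E'curve a).Point} (hP : P ≠ 0) : √a ≤ xc P := by
  cases P with
  | zero => exact absurd rfl hP
  | some _ _ h => exact sqrt_le_of_equation ha h.1

/-- With `u = x − √a` the tangent slope is `(3u² + a)/(2y)` and `y² = u(u² + a)`; the claim
reduces to `(3u² + s²)² − (9u − 3s)·u(u² + s²) = 3su(u − s/2)² + 9s³u/4 + s⁴ ≥ 0`. -/
lemma xc_div_four_le_xc_two_smul (ha : 0 ≤ a) {P : (E'curve a).Point} (h2P : 2 • P ≠ 0) :
    xc P / 4 ≤ xc (2 • P) := by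
  cases P with
  | zero => exact absurd (nsmul_zero 2) h2P
  | some x y h =>
    have hneg : y ≠ (E'curve a).negY x y := by
      intro hy
      exact h2P (by rw [two_smul, Point.add_self_of_Y_eq hy])
    have hy : y ≠ 0 := fun hy => hneg (by simp [hy, negY, E'curve])
    have hy2 := (equation_iff ha).1 h.1
    have hu : 0 < x - √a := by
      refine (sub_nonneg.2 (sqrt_le_of_equation ha h.1)).lt_of_ne fun hu => hy ?_
      rw [← hu] at hy2
      simpa using hy2
    rw [two_smul, Point.add_self_of_Y_ne hneg]
    change x / 4 ≤ (E'curve a).addX x x ((E'curve a).slope x x y y)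
    rw [slope_of_Y_ne rfl hneg]
    simp only [addX, negY, E'curve, zero_mul, sub_zero, add_zero, sub_neg_eq_add]
    set s := √a
    have hs : 0 ≤ s := Real.sqrt_nonneg a
    rw [show a = s ^ 2 from (Real.sq_sqrt ha).symm, div_pow, ← two_mul]
    have key : (9 * x / 4 - 3 * s) * (2 * y) ^ 2 ≤ (3 * x ^ 2 + 2 * (-3 * s) * x + 4 * s ^ 2) ^ 2 := by
      nlinarith [mul_nonneg (mul_nonneg hs hu.le) (sq_nonneg (x - s - s / 2)),
        mul_nonneg (pow_nonneg hs 3) hu.le, pow_nonneg hs 4]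
    have := (le_div_iff₀ (by positivity)).2 key
    linarith

lemma xc_div_four_pow_le_xc_two_pow_smul (ha : 0 ≤ a) (P : (E'curve a).Point) (j : ℕ)
    (hj : 2 ^ j • P ≠ 0) : xc P / 4 ^ j ≤ xc (2 ^ j • P) := by
  induction j with
  | zero => simp
  | succ j ih =>
    have h2 : 2 ^ (j + 1) • P = 2 • 2 ^ j • P := by rw [pow_succ', mul_smul]
    rw [h2] at hj ⊢
    have hPj : 2 ^ j • P ≠ 0 := fun h0 => hj (by rw [h0, nsmul_zero])
    calc xc P / 4 ^ (j + 1) = xc P / 4 ^ j / 4 := by rw [pow_succ, div_div]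
      _ ≤ xc (2 ^ j • P) / 4 := by gcongr; exact ih hPj
      _ ≤ xc (2 • 2 ^ j • P) := xc_div_four_le_xc_two_smul ha hj

end E'curve

lemma zE'_eq_one_sub {a x : ℝ} (ha : 0 ≤ a) (hx : x ≠ 0) :
    zE' a x = 1 - 8 * (√a / x) ^ 2 * (1 - √a / x) ^ 2 := by
  rw [zE', Real.rpow_three_halves ha]
  set s := √a
  rw [show a = s ^ 2 from (Real.sq_sqrt ha).symm]
  field_simp
  ring

/-- `log z ≥ 1 − 1/z`, and `1/z < 1 + 8t²` amounts to `8t³(t + 8(1 − t)(t − 1/2)²) > 0`. -/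
lemma neg_eight_mul_sq_lt_log_one_sub {t : ℝ} (ht : 0 < t) (ht1 : t ≤ 1) :
    -(8 * t ^ 2) < Real.log (1 - 8 * t ^ 2 * (1 - t) ^ 2) := by
  have hz : 0 < 1 - 8 * t ^ 2 * (1 - t) ^ 2 := by
    nlinarith [sq_nonneg (2 * t - 1), mul_nonneg ht.le (sub_nonneg.2 ht1)]
  have hinv : (1 - 8 * t ^ 2 * (1 - t) ^ 2)⁻¹ < 1 + 8 * t ^ 2 := by
    rw [inv_lt_iff_one_lt_mul₀ hz]
    nlinarith [pow_pos ht 4,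
      mul_nonneg (pow_pos ht 3).le (mul_nonneg (sub_nonneg.2 ht1) (sq_nonneg (t - 1 / 2)))]
  linarith [Real.one_sub_inv_le_log_of_pos hz]

theorem logz_2kP_lower_bound_c_general (a : ℝ) (ha : 0 < a) (k : ℕ)
    (c : ℝ) (hc : (4 : ℝ) ^ (k - 1) < c)
    (P' : (E'curve a).Point)
    (hx : c * Real.sqrt a ≤ xc P')
    (h2k : (2 ^ k) • P' ≠ 0) :
    Real.log (zE' a (xc ((2 ^ k) • P'))) > -(128 * (4 : ℝ) ^ (2 * (k - 1)) / c ^ 2) := by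
  have hc0 : 0 < c := (pow_pos (by norm_num) _).trans hc
  set X := xc ((2 ^ k) • P')
  have hsX : √a ≤ X := E'curve.sqrt_le_xc ha.le h2k
  have hX : 0 < X := (Real.sqrt_pos.2 ha).trans_le hsX
  have hcX : c * √a / 4 ^ k ≤ X :=
    (div_le_div_of_nonneg_right hx (by positivity)).trans
      (E'curve.xc_div_four_pow_le_xc_two_pow_smul ha.le P' k h2k)
  have ht : √a / X ≤ 4 ^ k / c := by
    rw [div_le_div_iff₀ hX hc0]
    rw [div_le_iff₀ (by positivity)] at hcX
    linarith
  have h4k : (4 : ℝ) ^ k ≤ 4 * 4 ^ (k - 1) := by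
    rw [← pow_succ']
    exact pow_le_pow_right₀ (by norm_num) (by omega)
  rw [zE'_eq_one_sub ha.le hX.ne']
  calc -(128 * (4 : ℝ) ^ (2 * (k - 1)) / c ^ 2) = -(8 * ((4 * 4 ^ (k - 1)) / c) ^ 2) := by ring
    _ ≤ -(8 * (√a / X) ^ 2) := by gcongr -(8 * ?_ ^ 2); exact ht.trans (by gcongr)
    _ < _ := neg_eight_mul_sq_lt_log_one_sub (by positivity) ((div_le_one hX).2 hsX)

/-- Lemma 3.3(b): for `a > 0`, an integer `k ≥ 1` and a real `c > 4^{k−1}`, if `P'` is a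
finite point of `E'_a(ℝ)` with `x(P') ≥ c·√a` and `2^kP'` is a finite point, then
`log z(2^kP') > −128·4^{2(k−1)}/c²`. -/
theorem logz_2kP_lower_bound_c (a : ℝ) (ha : 0 < a) (k : ℕ) (hk : 1 ≤ k)
    (c : ℝ) (hc : (4 : ℝ) ^ (k - 1) < c)
    (P' : (E'curve a).Point) (hP' : P' ≠ 0)
    (hx : c * Real.sqrt a ≤ xc P')
    (h2k : (2 ^ k) • P' ≠ 0) :
    Real.log (zE' a (xc ((2 ^ k) • P'))) > -(128 * (4 : ℝ) ^ (2 * (k - 1)) / c ^ 2) :=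
  logz_2kP_lower_bound_c_general a ha k c hc P' hx h2k
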